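/- Let n be an odd integer with n > 1. Then there is no positive integer m with f(m) = n and d(m) = 4n. -/

import Mathlib

/-- The Carmichael function: the exponent of the multiplicative group mod `m`. -/
noncomputable def carmichael (m : ℕ) : ℕ := Monoid.exponent (ZMod m)ˣ

/-- The radical of `m`: the product of the distinct primes dividing `m`. -/
def radN (m : ℕ) : ℕ := ∏ p ∈ m.primeFactors, p

/-- `δ(m) = 2` if `4 ∣ m`, else `1`. -/
def deltaN (m : ℕ) : ℕ := if 4 ∣ m then 2 else 1

/-- `d(m) = gcd(m, δ(m)·φ(rad m))`. -/
def dFun (m : ℕ) : ℕ := Nat.gcd m (deltaN m * Nat.totient (radN m))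

/-- `f(m) = gcd(m, δ(m)·λ(m)·φ(rad m)/φ(m))`. -/
noncomputable def fFun (m : ℕ) : ℕ :=
  Nat.gcd m (deltaN m * carmichael m * Nat.totient (radN m) / Nat.totient m)

/-!
Suppose `d(m) = 4n` with `n > 1` odd, so `4n ∣ m` and `δ(m) = 2`.

If `8 ∣ m`, take an odd prime `q ∣ n`. Then `q ∣ m` and `q ∣ 2φ(rad m) = 2∏_{p ∣ m} (p - 1)`,
so `q ∣ p - 1` for some prime `p ∣ m`, necessarily odd and different from `q`. The factors
`(p - 1)(q - 1)` make `4 ∣ φ(rad m)`, hence `8 ∣ gcd(m, 2φ(rad m)) = 4n`, impossible.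

If `8 ∤ m`, then `φ(m) = (m / rad m)·φ(rad m)` and `m / rad m ∣ λ(m)` (for odd `p` because
`λ(p^(k+1)) = p^k (p - 1)`, and for `p = 2` because `λ(4) = 2`). So the quotient in `f(m)` is
`2λ(m) / (m / rad m)`, which is even, and `f(m)` is even, contradicting `f(m) = n`.
-/

open Nat

lemma carmichael_eq_arithmeticFunction_carmichael {m : ℕ} (hm : m ≠ 0) :
    carmichael m = ArithmeticFunction.carmichael m :=
  (ArithmeticFunction.carmichael_eq_exponent hm).symm

lemma radN_pos (m : ℕ) : 0 < radN m :=
  Finset.prod_pos fun _ hp => (prime_of_mem_primeFactors hp).pos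

lemma radN_dvd (m : ℕ) : radN m ∣ m := prod_primeFactors_dvd m

lemma primeFactors_radN (m : ℕ) : (radN m).primeFactors = m.primeFactors :=
  primeFactors_prod fun _ hp => prime_of_mem_primeFactors hp

lemma totient_radN (m : ℕ) : φ (radN m) = ∏ p ∈ m.primeFactors, (p - 1) := by
  rw [totient_eq_div_primeFactors_mul, primeFactors_radN, ← radN, Nat.div_self (radN_pos m),
    one_mul]

lemma totient_eq_div_radN_mul (m : ℕ) : φ m = m / radN m * φ (radN m) := by
  rw [totient_radN]
  exact totient_eq_div_primeFactors_mul m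

lemma exists_mem_primeFactors_dvd_sub_one {m q : ℕ} (hq : q.Prime) (h : q ∣ φ (radN m)) :
    ∃ p ∈ m.primeFactors, q ∣ p - 1 := by
  rw [totient_radN] at h
  exact (Prime.dvd_finsetProd_iff hq.prime _).mp h

lemma four_dvd_totient_radN {m p q : ℕ} (hp : p ∈ m.primeFactors) (hq : q ∈ m.primeFactors)
    (hpq : p ≠ q) (hp2 : p ≠ 2) (hq2 : q ≠ 2) : 4 ∣ φ (radN m) := by
  have hprod : (p - 1) * (q - 1) ∣ φ (radN m) := by
    rw [totient_radN, ← Finset.prod_pair (f := fun p => p - 1) hpq]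
    exact Finset.prod_dvd_prod_of_subset _ _ _ (Finset.insert_subset hp (by simpa using hq))
  obtain ⟨a, ha⟩ := (prime_of_mem_primeFactors hp).even_sub_one hp2
  obtain ⟨b, hb⟩ := (prime_of_mem_primeFactors hq).even_sub_one hq2
  exact dvd_trans ⟨a * b, by rw [ha, hb]; ring⟩ hprod

lemma eight_dvd_dFun {m q : ℕ} (hm : m ≠ 0) (h8 : 8 ∣ m) (hq : q.Prime) (hq2 : q ≠ 2)
    (hqd : q ∣ dFun m) : 8 ∣ dFun m := by
  have hδ : deltaN m = 2 := if_pos (dvd_trans (by norm_num) h8)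
  have hqm : q ∣ m := hqd.trans (Nat.gcd_dvd_left _ _)
  have hqφ : q ∣ φ (radN m) := by
    have hq2φ : q ∣ 2 * φ (radN m) := hδ ▸ hqd.trans (Nat.gcd_dvd_right _ _)
    exact ((coprime_primes hq prime_two).mpr hq2).dvd_of_dvd_mul_left hq2φ
  obtain ⟨p, hp, hqp⟩ := exists_mem_primeFactors_dvd_sub_one hq hqφ
  have hp1 : 2 ≤ p := (prime_of_mem_primeFactors hp).two_le
  have hqp_le : q ≤ p - 1 := le_of_dvd (by omega) hqp
  have h4 := four_dvd_totient_radN hp (mem_primeFactors.mpr ⟨hq, hqm, hm⟩)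
    (by omega) (by have := hq.two_le; omega) hq2
  rw [dFun, hδ]
  exact Nat.dvd_gcd h8 (by omega)

lemma pow_dvd_carmichael_prime_pow_succ {p k : ℕ} (hp : p.Prime) (hk : p = 2 → k ≤ 1) :
    p ^ k ∣ ArithmeticFunction.carmichael (p ^ (k + 1)) := by
  by_cases hp2 : p = 2
  · subst hp2
    rw [ArithmeticFunction.carmichael_two_pow_of_le_two (by omega), Nat.add_sub_cancel]
  · rw [ArithmeticFunction.carmichael_pow_of_prime_ne_two _ hp hp2, totient_prime_pow_succ hp]
    exact dvd_mul_right _ _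

lemma div_radN_dvd_carmichael {m : ℕ} (hm : m ≠ 0) (h8 : ¬ 8 ∣ m) :
    m / radN m ∣ carmichael m := by
  rw [carmichael_eq_arithmeticFunction_carmichael hm, Nat.dvd_iff_prime_pow_dvd_dvd]
  intro p k hp hpk
  rcases k.eq_zero_or_pos with rfl | hk
  · exact one_dvd _
  have hpm : p ^ (k + 1) ∣ m := by
    have hp_dvd : p ∣ m := (dvd_pow_self p hk.ne').trans (hpk.trans (div_dvd_of_dvd (radN_dvd m)))
    have hp_rad : p ∣ radN m := Finset.dvd_prod_of_mem _ (mem_primeFactors.mpr ⟨hp, hp_dvd, hm⟩)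
    have := mul_dvd_mul hpk hp_rad
    rwa [Nat.div_mul_cancel (radN_dvd m), ← pow_succ] at this
  refine (pow_dvd_carmichael_prime_pow_succ hp ?_).trans (ArithmeticFunction.carmichael_dvd hpm)
  rintro rfl
  by_contra hk2
  exact h8 ((pow_dvd_pow 2 (by omega : 3 ≤ k + 1)).trans hpm)

lemma fFun_eq_gcd_div (m : ℕ) : fFun m = Nat.gcd m (deltaN m * carmichael m / (m / radN m)) := by
  rw [fFun, totient_eq_div_radN_mul m, Nat.mul_div_mul_right _ _ (totient_pos.mpr (radN_pos m))]

lemma two_dvd_fFun {m : ℕ} (hm : m ≠ 0) (h4 : 4 ∣ m) (h8 : ¬ 8 ∣ m) : 2 ∣ fFun m := by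
  obtain ⟨c, hc⟩ := div_radN_dvd_carmichael hm h8
  have hk : 0 < m / radN m :=
    Nat.div_pos (le_of_dvd (pos_of_ne_zero hm) (radN_dvd m)) (radN_pos m)
  rw [fFun_eq_gcd_div, deltaN, if_pos h4, hc, mul_left_comm, Nat.mul_div_cancel_left _ hk]
  exact Nat.dvd_gcd ((by norm_num : 2 ∣ 4).trans h4) (dvd_mul_right 2 c)

theorem no_pair_n_four_n (n : ℕ) (hodd : Odd n) (hn : 1 < n) :
    ¬ ∃ m : ℕ, 0 < m ∧ fFun m = n ∧ dFun m = 4 * n := by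
  rintro ⟨m, hm, hf, hd⟩
  have hn2 : ¬ 2 ∣ n := by rw [← even_iff_two_dvd, not_even_iff_odd]; exact hodd
  have h4n : 4 * n ∣ m := hd ▸ Nat.gcd_dvd_left _ _
  by_cases h8 : 8 ∣ m
  · have hq2 : n.minFac ≠ 2 := fun h => hn2 (h ▸ n.minFac_dvd)
    have h8d := eight_dvd_dFun hm.ne' h8 (minFac_prime hn.ne') hq2
      (hd ▸ dvd_mul_of_dvd_right (minFac_dvd n) 4)
    rw [hd] at h8d
    omega
  · exact hn2 (hf ▸ two_dvd_fFun hm.ne' (dvd_of_mul_right_dvd h4n) h8)
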